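/- For any ε > 0 there is a δ = δ(ε) > 0, depending only on ε and q (not on the output alphabet B), such that: if Q : F_q → B is a q-ary input channel with finite output alphabet B, and A₁, A₂, B₁, B₂ are random variables jointly distributed as p(a₁,a₂,b₁,b₂) = q^{-2} Q(b₁ | a₁+a₂) Q(b₂ | a₂) (addition in F_q), and I(A₂; B₁B₂A₁) − I(A₂; B₂) < δ, then I(A₂; B₂) ∉ (ε, 1−ε). -/

import Mathlib

/-!
Under the uniform input law, let `P = outDist C` be the output law and `π_b = posterior C b` the
posterior of the input given the output `b`. Then
`I(A₂; B₂) = 1 - ∑_b P(b) H(π_b)` and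
`I(A₂; B₁B₂A₁) - I(A₂; B₂) = ∑_{b₁, b₂} P(b₁) P(b₂) (H(subConv π_{b₁} π_{b₂}) - H(π_{b₁}))`.
By Jensen every summand is nonnegative, and over `ZMod q` it vanishes only if `π_{b₁}` is
uniform or `π_{b₂}` is a point mass; by compactness it is at least some `c(τ) > 0` once both
entropies lie in `[τ, 1 - τ]`. If `I(A₂; B₂) ∈ (4τ, 1 - 4τ)`, either the outputs with posterior
entropy in `[τ, 1 - τ]` have mass `≥ τ`, or those with entropy `< τ` and those with entropy
`> 1 - τ` both have mass `> 2τ`, and pairing a low one with a high one gives a summand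
`≥ 1 - 2τ`. Either way the difference is at least `min c 1 * τ ^ 2`.
-/

open Finset

namespace PolarMAC

structure Chan (q : ℕ) where
  B : Type
  [fintypeB : Fintype B]
  Q : ZMod q → B → ℝ

attribute [instance] Chan.fintypeB

def IsChan {q : ℕ} [Fact (Nat.Prime q)] (C : Chan q) : Prop :=
  (∀ x b, 0 ≤ C.Q x b) ∧ ∀ x, ∑ b, C.Q x b = 1

noncomputable def Hq (q : ℕ) {α : Type*} [Fintype α] (p : α → ℝ) : ℝ :=
  ∑ a, -(p a * Real.logb q (p a))

noncomputable def MIq (q : ℕ) {α β : Type*} [Fintype α] [Fintype β] (p : α → β → ℝ) : ℝ :=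
  Hq q (fun a => ∑ b, p a b) + Hq q (fun b => ∑ a, p a b) - Hq q (fun ab : α × β => p ab.1 ab.2)

open Real

section Entropy

variable {ι : Type*} [Fintype ι]

theorem Hq_eq_sum_negMulLog_div (q : ℕ) (p : ι → ℝ) :
    Hq q p = (∑ i, negMulLog (p i)) / log q := by
  simp only [Hq, logb, negMulLog, sum_div]
  congr! 1 with i
  ring

theorem continuous_Hq (q : ℕ) : Continuous (Hq q : (ι → ℝ) → ℝ) := by
  simp_rw [funext (Hq_eq_sum_negMulLog_div q)]
  fun_prop

theorem Hq_comp_equiv {κ : Type*} [Fintype κ] (q : ℕ) (e : κ ≃ ι) (p : ι → ℝ) :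
    Hq q (p ∘ e) = Hq q p :=
  e.sum_comp fun i => -(p i * logb q (p i))

theorem Hq_nonneg (q : ℕ) {p : ι → ℝ} (hp : p ∈ stdSimplex ℝ ι) : 0 ≤ Hq q p := by
  rw [Hq_eq_sum_negMulLog_div]
  exact div_nonneg (sum_nonneg fun i _ =>
    negMulLog_nonneg (hp.1 i) (mem_Icc_of_mem_stdSimplex hp i).2) (log_natCast_nonneg q)

theorem sum_mul_negMulLog_le {w x : ι → ℝ} (hw : w ∈ stdSimplex ℝ ι) (hx : ∀ i, 0 ≤ x i) :
    ∑ i, w i * negMulLog (x i) ≤ negMulLog (∑ i, w i * x i) :=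
  concaveOn_negMulLog.le_map_sum (fun i _ => hw.1 i) hw.2 fun i _ => hx i

theorem sum_mul_negMulLog_lt {w x : ι → ℝ} (hw : w ∈ stdSimplex ℝ ι) (hx : ∀ i, 0 ≤ x i)
    {j k : ι} (hj : w j ≠ 0) (hk : w k ≠ 0) (hjk : x j ≠ x k) :
    ∑ i, w i * negMulLog (x i) < negMulLog (∑ i, w i * x i) :=
  (strictConcaveOn_negMulLog.lt_map_sum_iff_of_nonneg (fun i _ => hw.1 i) hw.2
    fun i _ => hx i).2 ⟨j, mem_univ j, k, mem_univ k, hj, hk, hjk⟩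

theorem sum_negMulLog_le_log_card {p : ι → ℝ} (hp : p ∈ stdSimplex ℝ ι) :
    ∑ i, negMulLog (p i) ≤ log (Fintype.card ι) := by
  have hn : (0 : ℝ) < Fintype.card ι := by
    obtain ⟨i, -⟩ := exists_ne_zero_of_sum_ne_zero (hp.2.trans_ne one_ne_zero)
    exact_mod_cast Fintype.card_pos_iff.2 ⟨i⟩
  have hunif : (fun _ => (Fintype.card ι : ℝ)⁻¹) ∈ stdSimplex ℝ ι :=
    ⟨fun _ => by positivity, by simp [hn.ne']⟩
  have := sum_mul_negMulLog_le hunif hp.1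
  rw [← mul_sum, ← mul_sum, hp.2, mul_one, negMulLog, log_inv] at this
  field_simp at this
  linarith

theorem exists_ne_of_Hq_pos {q : ℕ} {p : ι → ℝ} (hp : p ∈ stdSimplex ℝ ι) (h : 0 < Hq q p) :
    ∃ i j, i ≠ j ∧ p i ≠ 0 ∧ p j ≠ 0 := by
  by_contra! hsingle
  obtain ⟨i, -, hi⟩ := exists_ne_zero_of_sum_ne_zero (hp.2.trans_ne one_ne_zero)
  have hzero : ∀ j ≠ i, p j = 0 := fun j hj => hsingle i j hj.symm hi
  have hone : p i = 1 := by rw [← hp.2, Fintype.sum_eq_single i hzero]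
  rw [Hq_eq_sum_negMulLog_div,
    Fintype.sum_eq_single i fun j hj => by rw [hzero j hj, negMulLog_zero], hone, negMulLog_one,
    zero_div] at h
  exact h.false

end Entropy

section ChainRule

variable {α β : Type*} [Fintype α] [Fintype β]

theorem Hq_mul_cond (q : ℕ) (p : β → ℝ) (r : β → α → ℝ) (hr : ∀ b, p b ≠ 0 → ∑ a, r b a = 1) :
    Hq q (fun x : α × β => p x.2 * r x.2 x.1) = Hq q p + ∑ b, p b * Hq q (r b) := by
  have hb : ∀ b, ∑ a, negMulLog (p b * r b a) =
      negMulLog (p b) + p b * ∑ a, negMulLog (r b a) := by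
    intro b
    simp only [negMulLog_mul, sum_add_distrib, ← sum_mul, ← mul_sum]
    rcases eq_or_ne (p b) 0 with h0 | h0
    · simp [h0]
    · rw [hr b h0, one_mul]
  simp only [Hq_eq_sum_negMulLog_div, Fintype.sum_prod_type_right, hb, sum_add_distrib, add_div,
    sum_div, mul_div_assoc]

theorem Hq_mul (q : ℕ) {f : α → ℝ} {g : β → ℝ} (hf : ∑ a, f a = 1) (hg : ∑ b, g b = 1) :
    Hq q (fun x : α × β => f x.1 * g x.2) = Hq q f + Hq q g := by
  have := Hq_mul_cond q g (fun _ => f) fun _ _ => hf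
  rw [← sum_mul, hg, one_mul] at this
  simp_rw [mul_comm (f _), this, add_comm]

end ChainRule

section SubConv

variable {G : Type*} [AddCommGroup G] [Fintype G]

/-- The law of `X - Y` for independent `X ∼ μ` and `Y ∼ ν`. -/
def subConv (μ ν : G → ℝ) (s : G) : ℝ :=
  ∑ a, ν a * μ (s + a)

theorem sum_sum_mul_add (ν f : G → ℝ) :
    ∑ s, ∑ a, ν a * f (s + a) = (∑ s, f s) * ∑ a, ν a := by
  rw [sum_comm, mul_comm, sum_mul]
  exact sum_congr rfl fun a _ => by
    rw [← mul_sum]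
    exact congrArg _ (Equiv.sum_comp (Equiv.addRight a) f)

theorem sum_subConv (μ ν : G → ℝ) : ∑ s, subConv μ ν s = (∑ s, μ s) * ∑ a, ν a :=
  sum_sum_mul_add ν μ

theorem continuous_subConv : Continuous fun x : (G → ℝ) × (G → ℝ) => subConv x.1 x.2 :=
  continuous_pi fun s => by unfold subConv; fun_prop

theorem Hq_subConv_comm (q : ℕ) (μ ν : G → ℝ) : Hq q (subConv μ ν) = Hq q (subConv ν μ) := by
  have : subConv μ ν = subConv ν μ ∘ Equiv.neg G := by
    ext s
    exact Fintype.sum_equiv (Equiv.addLeft s) _ _ fun a => by simp [mul_comm]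
  rw [this, Hq_comp_equiv]

theorem Hq_le_Hq_subConv (q : ℕ) {μ ν : G → ℝ} (hμ : ∀ a, 0 ≤ μ a) (hν : ν ∈ stdSimplex ℝ G) :
    Hq q μ ≤ Hq q (subConv μ ν) := by
  simp only [Hq_eq_sum_negMulLog_div]
  refine div_le_div_of_nonneg_right ?_ (log_natCast_nonneg q)
  rw [← mul_one (∑ s, _), ← hν.2, ← sum_sum_mul_add]
  exact sum_le_sum fun s _ => sum_mul_negMulLog_le hν fun a => hμ _

theorem Hq_le_Hq_subConv_right (q : ℕ) {μ ν : G → ℝ} (hμ : μ ∈ stdSimplex ℝ G)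
    (hν : ∀ a, 0 ≤ ν a) : Hq q ν ≤ Hq q (subConv μ ν) :=
  Hq_subConv_comm q μ ν ▸ Hq_le_Hq_subConv q hν hμ

theorem Hq_lt_Hq_subConv_of_ne {q : ℕ} (hq : 1 < q) {μ ν : G → ℝ} (hμ : ∀ a, 0 ≤ μ a)
    (hν : ν ∈ stdSimplex ℝ G) {y₁ y₂ s : G} (h₁ : ν y₁ ≠ 0) (h₂ : ν y₂ ≠ 0)
    (hs : μ (s + y₁) ≠ μ (s + y₂)) :
    Hq q μ < Hq q (subConv μ ν) := by
  simp only [Hq_eq_sum_negMulLog_div]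
  refine div_lt_div_of_pos_right ?_ (log_pos (by exact_mod_cast hq))
  rw [← mul_one (∑ s, _), ← hν.2, ← sum_sum_mul_add]
  exact sum_lt_sum (fun s _ => sum_mul_negMulLog_le hν fun a => hμ _)
    ⟨s, mem_univ s, sum_mul_negMulLog_lt hν (fun a => hμ _) h₁ h₂ hs⟩

end SubConv

section ZMod

variable {q : ℕ} [Fact q.Prime]

theorem apply_eq_apply_zero_of_periodic {α : Type*} {f : ZMod q → α} {d : ZMod q}
    (hf : Function.Periodic f d) (hd : d ≠ 0) (x : ZMod q) : f x = f 0 := by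
  have hx : (x * d⁻¹).val • d = x := by
    rw [nsmul_eq_mul, ZMod.natCast_zmod_val, inv_mul_cancel_right₀ hd]
  simpa [hx] using hf.nsmul (x * d⁻¹).val 0

theorem Hq_uniform : Hq q (fun _ : ZMod q => (q : ℝ)⁻¹) = 1 := by
  have hq : (1 : ℝ) < q := by exact_mod_cast (Fact.out : q.Prime).one_lt
  rw [Hq_eq_sum_negMulLog_div, sum_const, card_univ, ZMod.card, negMulLog, log_inv, nsmul_eq_mul]
  field_simp [(log_pos hq).ne']

theorem Hq_le_one {μ : ZMod q → ℝ} (hμ : μ ∈ stdSimplex ℝ (ZMod q)) : Hq q μ ≤ 1 := by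
  have hq : (1 : ℝ) < q := by exact_mod_cast (Fact.out : q.Prime).one_lt
  rw [Hq_eq_sum_negMulLog_div, div_le_one (log_pos hq)]
  simpa [ZMod.card] using sum_negMulLog_le_log_card hμ

theorem Hq_lt_Hq_subConv {μ ν : ZMod q → ℝ} (hμ : μ ∈ stdSimplex ℝ (ZMod q))
    (hν : ν ∈ stdSimplex ℝ (ZMod q)) (hμ1 : Hq q μ < 1) (hν0 : 0 < Hq q ν) :
    Hq q μ < Hq q (subConv μ ν) := by
  obtain ⟨y₁, y₂, hy, h₁, h₂⟩ := exists_ne_of_Hq_pos hν hν0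
  obtain ⟨s, hs⟩ : ∃ s, μ (s + y₁) ≠ μ (s + y₂) := by
    by_contra! hper
    have hconst := apply_eq_apply_zero_of_periodic (f := μ) (d := y₁ - y₂)
      (fun x => by simpa [← add_sub_right_comm, add_sub_assoc] using hper (x - y₂))
      (sub_ne_zero.2 hy)
    have : μ = fun _ => (q : ℝ)⁻¹ := by
      have hsum := hμ.2
      simp only [hconst, sum_const, card_univ, ZMod.card, nsmul_eq_mul] at hsum
      ext x
      rw [hconst, eq_inv_of_mul_eq_one_right hsum]
    exact hμ1.ne (this ▸ Hq_uniform)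
  exact Hq_lt_Hq_subConv_of_ne (Fact.out : q.Prime).one_lt hμ.1 hν h₁ h₂ hs

theorem exists_pos_le_Hq_subConv_sub {τ : ℝ} (hτ : 0 < τ) :
    ∃ c > 0, ∀ μ ∈ stdSimplex ℝ (ZMod q), ∀ ν ∈ stdSimplex ℝ (ZMod q),
      Hq q μ ∈ Set.Icc τ (1 - τ) → Hq q ν ∈ Set.Icc τ (1 - τ) →
      c ≤ Hq q (subConv μ ν) - Hq q μ := by
  set K := (stdSimplex ℝ (ZMod q) ×ˢ stdSimplex ℝ (ZMod q)) ∩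
    ((fun x => Hq q x.1) ⁻¹' Set.Icc τ (1 - τ) ∩ (fun x => Hq q x.2) ⁻¹' Set.Icc τ (1 - τ))
  have hK : IsCompact K := ((isCompact_stdSimplex ℝ _).prod (isCompact_stdSimplex ℝ _)).inter_right
    ((isClosed_Icc.preimage ((continuous_Hq q).comp continuous_fst)).inter
      (isClosed_Icc.preimage ((continuous_Hq q).comp continuous_snd)))
  have hcont : Continuous fun x : (ZMod q → ℝ) × (ZMod q → ℝ) =>
      Hq q (subConv x.1 x.2) - Hq q x.1 :=
    ((continuous_Hq q).comp continuous_subConv).sub ((continuous_Hq q).comp continuous_fst)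
  obtain ⟨c, hc, hcK⟩ := hK.exists_forall_le' hcont.continuousOn (a := 0)
    fun x ⟨⟨hμ, hν⟩, hμτ, hντ⟩ => sub_pos.2 <| Hq_lt_Hq_subConv hμ hν (by linarith [hμτ.2])
      (by linarith [hντ.1])
  exact ⟨c, hc, fun μ hμ ν hν hμτ hντ => hcK (μ, ν) ⟨⟨hμ, hν⟩, hμτ, hντ⟩⟩

end ZMod

section Polarization

variable {B : Type*} [Fintype B] {P : B → ℝ}

theorem mul_sum_mul_sum_le_sum_sum (hP : ∀ b, 0 ≤ P b) {F : B → B → ℝ}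
    (hF : ∀ b₁ b₂, 0 < P b₁ → 0 < P b₂ → 0 ≤ F b₁ b₂) {k : ℝ} {S T : Finset B}
    (hk : ∀ b₁ ∈ S, ∀ b₂ ∈ T, 0 < P b₁ → 0 < P b₂ → k ≤ F b₁ b₂) :
    k * ((∑ b ∈ S, P b) * ∑ b ∈ T, P b) ≤ ∑ b₁, ∑ b₂, P b₁ * P b₂ * F b₁ b₂ := by
  have key : ∀ b₁ b₂, 0 ≤ P b₁ * P b₂ * F b₁ b₂ ∧
      (b₁ ∈ S → b₂ ∈ T → k * (P b₁ * P b₂) ≤ P b₁ * P b₂ * F b₁ b₂) := by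
    intro b₁ b₂
    rcases (hP b₁).eq_or_lt with h₁ | h₁
    · simp [← h₁]
    rcases (hP b₂).eq_or_lt with h₂ | h₂
    · simp [← h₂]
    exact ⟨mul_nonneg (by positivity) (hF b₁ b₂ h₁ h₂), fun hb₁ hb₂ => by
      rw [mul_comm k]; exact mul_le_mul_of_nonneg_left (hk b₁ hb₁ b₂ hb₂ h₁ h₂) (by positivity)⟩
  calc k * ((∑ b ∈ S, P b) * ∑ b ∈ T, P b) = ∑ b₁ ∈ S, ∑ b₂ ∈ T, k * (P b₁ * P b₂) := by
        simp_rw [sum_mul_sum, mul_sum]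
    _ ≤ ∑ b₁ ∈ S, ∑ b₂ ∈ T, P b₁ * P b₂ * F b₁ b₂ :=
        sum_le_sum fun b₁ hb₁ => sum_le_sum fun b₂ hb₂ => (key b₁ b₂).2 hb₁ hb₂
    _ ≤ ∑ b₁ ∈ S, ∑ b₂, P b₁ * P b₂ * F b₁ b₂ := sum_le_sum fun b₁ _ =>
        sum_le_sum_of_subset_of_nonneg (subset_univ T) fun b₂ _ _ => (key b₁ b₂).1
    _ ≤ ∑ b₁, ∑ b₂, P b₁ * P b₂ * F b₁ b₂ := sum_le_sum_of_subset_of_nonneg (subset_univ S)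
        fun b₁ _ _ => sum_nonneg fun b₂ _ => (key b₁ b₂).1

theorem sum_mul_le_and_one_sub_sum_mul_le (hP : P ∈ stdSimplex ℝ B) {h : B → ℝ}
    (hh : ∀ b, 0 < P b → h b ∈ Set.Icc 0 1) {τ : ℝ} (hτ : 0 ≤ τ) :
    ∑ b, P b * h b ≤ τ + ∑ b with h b ∈ Set.Icc τ (1 - τ), P b + ∑ b with 1 - τ < h b, P b ∧
      1 - ∑ b, P b * h b ≤ τ + ∑ b with h b < τ, P b + ∑ b with h b ∈ Set.Icc τ (1 - τ), P b := by
  classical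
  set L := univ.filter fun b => h b < τ
  set M := univ.filter fun b => h b ∈ Set.Icc τ (1 - τ)
  set U := univ.filter fun b => 1 - τ < h b
  have hpt : ∀ b, P b * h b ≤ τ * P b + (if b ∈ M then P b else 0) + (if b ∈ U then P b else 0) ∧
      P b * (1 - h b) ≤ τ * P b + (if b ∈ L then P b else 0) + (if b ∈ M then P b else 0) := by
    intro b
    rcases (hP.1 b).eq_or_lt with h0 | hpos
    · simp [← h0]
    obtain ⟨hb0, hb1⟩ := hh b hpos
    have hite : ∀ S : Finset B, 0 ≤ if b ∈ S then P b else 0 := fun S => by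
      split_ifs
      exacts [hpos.le, le_rfl]
    rcases lt_or_ge (h b) τ with hbL | hbL
    · rw [if_pos (show b ∈ L by simpa [L] using hbL)]
      constructor <;> nlinarith [hite M, hite U]
    rcases le_or_gt (h b) (1 - τ) with hbM | hbU
    · rw [if_pos (show b ∈ M by simp [M, hbL, hbM])]
      constructor <;> nlinarith [hite L, hite U]
    · rw [if_pos (show b ∈ U by simp [U, hbU])]
      constructor <;> nlinarith [hite L, hite M]
  constructor
  · calc _ ≤ _ := sum_le_sum fun b _ => (hpt b).1
      _ = _ := by simp only [sum_add_distrib, ← mul_sum, hP.2, mul_one, sum_ite_mem, univ_inter]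
  · calc _ = ∑ b, P b * (1 - h b) := by simp only [mul_sub, mul_one, sum_sub_distrib, hP.2]
      _ ≤ _ := sum_le_sum fun b _ => (hpt b).2
      _ = _ := by simp only [sum_add_distrib, ← mul_sum, hP.2, mul_one, sum_ite_mem, univ_inter]

theorem min_mul_sq_le_sum_sum_sub_sum {h : B → ℝ} {g : B → B → ℝ} {τ c : ℝ}
    (hP : P ∈ stdSimplex ℝ B) (hτ : 0 ≤ τ) (hc : 0 ≤ c)
    (hh : ∀ b, 0 < P b → h b ∈ Set.Icc 0 1)
    (hg : ∀ b₁ b₂, 0 < P b₁ → 0 < P b₂ → h b₁ ≤ g b₁ b₂ ∧ h b₂ ≤ g b₁ b₂)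
    (hgap : ∀ b₁ b₂, 0 < P b₁ → 0 < P b₂ →
      h b₁ ∈ Set.Icc τ (1 - τ) → h b₂ ∈ Set.Icc τ (1 - τ) → c ≤ g b₁ b₂ - h b₁)
    (hmean : ∑ b, P b * h b ∈ Set.Ioo (4 * τ) (1 - 4 * τ)) :
    min c 1 * τ ^ 2 ≤ ∑ b₁, ∑ b₂, P b₁ * P b₂ * g b₁ b₂ - ∑ b, P b * h b := by
  have hD : ∑ b₁, ∑ b₂, P b₁ * P b₂ * g b₁ b₂ - ∑ b, P b * h b =
      ∑ b₁, ∑ b₂, P b₁ * P b₂ * (g b₁ b₂ - h b₁) := by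
    simp_rw [mul_sub, sum_sub_distrib, ← sum_mul, ← mul_sum, hP.2, mul_one]
  have hF : ∀ b₁ b₂, 0 < P b₁ → 0 < P b₂ → 0 ≤ g b₁ b₂ - h b₁ := fun b₁ b₂ h₁ h₂ =>
    sub_nonneg.2 (hg b₁ b₂ h₁ h₂).1
  obtain ⟨hupper, hlower⟩ := sum_mul_le_and_one_sub_sum_mul_le hP hh hτ
  set l := ∑ b with h b < τ, P b
  set m := ∑ b with h b ∈ Set.Icc τ (1 - τ), P b
  set u := ∑ b with 1 - τ < h b, P b
  obtain ⟨hmean₁, hmean₂⟩ := hmean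
  rw [hD]
  rcases le_or_gt τ m with hm | hm
  · calc min c 1 * τ ^ 2 ≤ c * (m * m) := by
          gcongr
          · exact min_le_left c 1
          · nlinarith
      _ ≤ _ := mul_sum_mul_sum_le_sum_sum hP.1 hF fun b₁ hb₁ b₂ hb₂ h₁ h₂ =>
          hgap b₁ b₂ h₁ h₂ (mem_filter.1 hb₁).2 (mem_filter.1 hb₂).2
  · have hl : 2 * τ < l := by linarith
    have hu : 2 * τ < u := by linarith
    calc min c 1 * τ ^ 2 ≤ 1 * τ ^ 2 := by gcongr; exact min_le_right c 1
      _ ≤ (3 / 4) * ((2 * τ) * (2 * τ)) := by nlinarith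
      _ ≤ (1 - 2 * τ) * (l * u) := by gcongr <;> linarith
      _ ≤ _ := mul_sum_mul_sum_le_sum_sum hP.1 hF fun b₁ hb₁ b₂ hb₂ h₁ h₂ => by
          linarith [(mem_filter.1 hb₁).2, (mem_filter.1 hb₂).2, (hg b₁ b₂ h₁ h₂).2]

end Polarization

section Channel

variable {q : ℕ} [Fact q.Prime]

noncomputable def outDist (C : Chan q) (b : C.B) : ℝ :=
  (∑ a, C.Q a b) / q

noncomputable def posterior (C : Chan q) (b : C.B) (a : ZMod q) : ℝ :=
  C.Q a b / ∑ a', C.Q a' b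

variable {C : Chan q}

theorem outDist_mem_stdSimplex (hC : IsChan C) : outDist C ∈ stdSimplex ℝ C.B := by
  refine ⟨fun b => div_nonneg (sum_nonneg fun a _ => hC.1 a b) q.cast_nonneg, ?_⟩
  simp only [outDist, ← sum_div]
  rw [sum_comm]
  simp [hC.2, ZMod.card]

theorem sum_posterior {b : C.B} (hb : outDist C b ≠ 0) : ∑ a, posterior C b a = 1 := by
  rw [outDist, div_ne_zero_iff] at hb
  simp only [posterior, ← sum_div, div_self hb.1]

theorem posterior_mem_stdSimplex (hC : IsChan C) {b : C.B} (hb : 0 < outDist C b) :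
    posterior C b ∈ stdSimplex ℝ (ZMod q) :=
  ⟨fun a => div_nonneg (hC.1 a b) (sum_nonneg fun a _ => hC.1 a b), sum_posterior hb.ne'⟩

theorem div_eq_outDist_mul_posterior (hC : IsChan C) (a : ZMod q) (b : C.B) :
    C.Q a b / q = outDist C b * posterior C b a := by
  rcases eq_or_ne (∑ a', C.Q a' b) 0 with h0 | h0
  · simp [outDist, posterior, h0, (sum_eq_zero_iff_of_nonneg fun a _ => hC.1 a b).1 h0 a]
  · simp only [outDist, posterior]
    field_simp

theorem sum_div_eq_one (hC : IsChan C) : ∑ x : ZMod q × C.B, C.Q x.1 x.2 / q = 1 := by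
  simp [Fintype.sum_prod_type, ← sum_div, hC.2, ZMod.card]

theorem Hq_div (hC : IsChan C) :
    Hq q (fun x : ZMod q × C.B => C.Q x.1 x.2 / q) =
      Hq q (outDist C) + ∑ b, outDist C b * Hq q (posterior C b) := by
  simp_rw [div_eq_outDist_mul_posterior hC]
  exact Hq_mul_cond q _ _ fun b hb => sum_posterior hb

end Channel

section MutualInformation

variable {q : ℕ} [Fact q.Prime] {C : Chan q}

theorem sum_sum_inv_sq_mul (hC : IsChan C) :
    (fun (a₂ : ZMod q) (b₂ : C.B) =>
        ∑ a₁, ∑ b₁, ((q : ℝ) ^ 2)⁻¹ * (C.Q (a₁ + a₂) b₁ * C.Q a₂ b₂)) =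
      fun a b => C.Q a b / q := by
  ext a₂ b₂
  simp only [← mul_sum, ← sum_mul, hC.2, one_mul, sum_const, card_univ, ZMod.card, nsmul_eq_mul]
  field_simp

theorem MIq_div (hC : IsChan C) :
    MIq q (fun a (b : C.B) => C.Q a b / q) = 1 - ∑ b, outDist C b * Hq q (posterior C b) := by
  have hunif : (fun a => ∑ b, C.Q a b / q) = fun _ : ZMod q => (q : ℝ)⁻¹ := by
    simp only [← sum_div, hC.2, one_div]
  have hout : (fun b => ∑ a, C.Q a b / q) = outDist C := by
    ext b
    simp only [outDist, sum_div]
  rw [MIq, hunif, hout, Hq_uniform, Hq_div hC]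
  ring

theorem Hq_split_output (hC : IsChan C) :
    Hq q (fun z : ZMod q × C.B × C.B => ∑ a₂,
      ((q : ℝ) ^ 2)⁻¹ * (C.Q (z.1 + a₂) z.2.1 * C.Q a₂ z.2.2)) =
      2 * Hq q (outDist C) + ∑ b₁, ∑ b₂, outDist C b₁ * outDist C b₂ *
        Hq q (subConv (posterior C b₁) (posterior C b₂)) := by
  have hsq : ∀ x y : ℝ, ((q : ℝ) ^ 2)⁻¹ * (x * y) = x / q * (y / q) := fun x y => by ring
  have hP := outDist_mem_stdSimplex hC
  have := Hq_mul_cond q (fun b : C.B × C.B => outDist C b.1 * outDist C b.2)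
    (fun b => subConv (posterior C b.1) (posterior C b.2)) fun b hb => by
      rw [sum_subConv, sum_posterior (left_ne_zero_of_mul hb),
        sum_posterior (right_ne_zero_of_mul hb), one_mul]
  rw [Hq_mul q hP.2 hP.2, Fintype.sum_prod_type] at this
  convert this using 2
  · ext z
    simp only [hsq, div_eq_outDist_mul_posterior hC, subConv, mul_sum]
    exact sum_congr rfl fun a₂ _ => by ring
  · ring

theorem Hq_split_joint (hC : IsChan C) :
    Hq q (fun x : ZMod q × (ZMod q × C.B × C.B) =>
      ((q : ℝ) ^ 2)⁻¹ * (C.Q (x.2.1 + x.1) x.2.2.1 * C.Q x.1 x.2.2.2)) =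
      2 * Hq q (fun x : ZMod q × C.B => C.Q x.1 x.2 / q) := by
  have hsq : ∀ x y : ℝ, ((q : ℝ) ^ 2)⁻¹ * (x * y) = x / q * (y / q) := fun x y => by ring
  -- `(A₁ + A₂, B₁)` and `(A₂, B₂)` are independent copies of `(A, B)`.
  let e : (ZMod q × C.B) × (ZMod q × C.B) ≃ ZMod q × (ZMod q × C.B × C.B) :=
    { toFun := fun y => (y.2.1, y.1.1 - y.2.1, y.1.2, y.2.2)
      invFun := fun x => ((x.2.1 + x.1, x.2.2.1), (x.1, x.2.2.2))
      left_inv := fun y => by simp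
      right_inv := fun x => by simp }
  refine (Hq_comp_equiv q e _).symm.trans ?_
  rw [two_mul, ← Hq_mul q (sum_div_eq_one hC) (sum_div_eq_one hC)]
  congr 1
  ext y
  simp [e, hsq]

theorem MIq_split (hC : IsChan C) :
    MIq q (fun (a₂ : ZMod q) (z : ZMod q × C.B × C.B) =>
        ((q : ℝ) ^ 2)⁻¹ * (C.Q (z.1 + a₂) z.2.1 * C.Q a₂ z.2.2)) =
      1 + ∑ b₁, ∑ b₂, outDist C b₁ * outDist C b₂ *
          Hq q (subConv (posterior C b₁) (posterior C b₂)) -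
        2 * ∑ b, outDist C b * Hq q (posterior C b) := by
  have hunif : (fun a₂ => ∑ z : ZMod q × C.B × C.B,
      ((q : ℝ) ^ 2)⁻¹ * (C.Q (z.1 + a₂) z.2.1 * C.Q a₂ z.2.2)) = fun _ => (q : ℝ)⁻¹ := by
    ext a₂
    simp only [Fintype.sum_prod_type, ← mul_sum, hC.2, mul_one, sum_const, card_univ, ZMod.card,
      nsmul_eq_mul]
    field_simp
  rw [MIq, hunif, Hq_uniform, Hq_split_output hC, Hq_split_joint hC, Hq_div hC]
  ring

end MutualInformation

theorem basic_polarization_lemma (q : ℕ) [Fact (Nat.Prime q)] (ε : ℝ) (hε : 0 < ε) :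
    ∃ δ > 0, ∀ C : Chan q, IsChan C →
      MIq q (fun (a₂ : ZMod q) (z : ZMod q × C.B × C.B) =>
          ((q : ℝ) ^ 2)⁻¹ * (C.Q (z.1 + a₂) z.2.1 * C.Q a₂ z.2.2)) -
        MIq q (fun (a₂ : ZMod q) (b₂ : C.B) =>
          ∑ a₁, ∑ b₁, ((q : ℝ) ^ 2)⁻¹ * (C.Q (a₁ + a₂) b₁ * C.Q a₂ b₂)) < δ →
      MIq q (fun (a₂ : ZMod q) (b₂ : C.B) =>
          ∑ a₁, ∑ b₁, ((q : ℝ) ^ 2)⁻¹ * (C.Q (a₁ + a₂) b₁ * C.Q a₂ b₂)) ∉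
        Set.Ioo ε (1 - ε) := by
  obtain ⟨c, hc, hgap⟩ := exists_pos_le_Hq_subConv_sub (q := q) (by positivity : 0 < ε / 4)
  refine ⟨min c 1 * (ε / 4) ^ 2, by positivity, fun C hC hlt hmem => ?_⟩
  rw [sum_sum_inv_sq_mul hC, MIq_div hC] at hlt hmem
  rw [MIq_split hC] at hlt
  have hpost : ∀ b, 0 < outDist C b → posterior C b ∈ stdSimplex ℝ (ZMod q) :=
    fun b => posterior_mem_stdSimplex hC
  have := min_mul_sq_le_sum_sum_sub_sum (outDist_mem_stdSimplex hC) (by positivity) hc.le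
    (fun b hb => ⟨Hq_nonneg q (hpost b hb), Hq_le_one (hpost b hb)⟩)
    (fun b₁ b₂ h₁ h₂ => ⟨Hq_le_Hq_subConv q (hpost b₁ h₁).1 (hpost b₂ h₂),
      Hq_le_Hq_subConv_right q (hpost b₁ h₁) (hpost b₂ h₂).1⟩)
    (fun b₁ b₂ h₁ h₂ => hgap _ (hpost b₁ h₁) _ (hpost b₂ h₂))
    ⟨by linarith [hmem.2], by linarith [hmem.1]⟩
  linarith

end PolarMAC
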